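/- The isometry V from the super-operator U(X) = (X ρ_A^{-1/2} ⊗ I)√ρ_AB intertwines relative modular operators: V†[σ_AB ⊗ (ρ_AB⁻¹)ᵀ]V = σ_A ⊗ (ρ_A⁻¹)ᵀ, where σ_A = Tr_B(σ_AB). -/

import Mathlib

open Matrix Kronecker
open scoped ComplexOrder

noncomputable def applyFun {n : Type*} [Fintype n] [DecidableEq n]
    (f : ℝ → ℝ) (A : Matrix n n ℂ) : Matrix n n ℂ := by
  classical exact
    if hA : A.IsHermitian then
      (hA.eigenvectorUnitary : Matrix n n ℂ) *
        Matrix.diagonal (fun i => (f (hA.eigenvalues i) : ℂ)) *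
        (star (hA.eigenvectorUnitary : Matrix n n ℂ))
    else 0

noncomputable def msqrt {n : Type*} [Fintype n] [DecidableEq n]
    (A : Matrix n n ℂ) : Matrix n n ℂ := by
  classical exact if h : A.PosSemidef then
    (h.1.eigenvectorUnitary : Matrix n n ℂ) *
      Matrix.diagonal ((↑) ∘ (√·) ∘ h.1.eigenvalues) *
      (star h.1.eigenvectorUnitary : Matrix n n ℂ) else 0

def vecOf {m n : Type*} (A : Matrix m n ℂ) : m × n → ℂ := fun p => A p.1 p.2

noncomputable def Srel {n : Type*} [Fintype n] [DecidableEq n]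
    (f : ℝ → ℝ) (ρ σ : Matrix n n ℂ) : ℝ :=
  (star (vecOf (msqrt ρ)) ⬝ᵥ (applyFun f (σ ⊗ₖ (ρ⁻¹)ᵀ) *ᵥ vecOf (msqrt ρ))).re

def OperatorConvexOn (I : Set ℝ) (f : ℝ → ℝ) : Prop :=
  ∀ (n : ℕ) (A B : Matrix (Fin n) (Fin n) ℂ) (hA : A.IsHermitian) (hB : B.IsHermitian),
    (∀ i, hA.eigenvalues i ∈ I) → (∀ i, hB.eigenvalues i ∈ I) →
    ∀ lam : ℝ, 0 ≤ lam → lam ≤ 1 →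
      ((lam : ℂ) • applyFun f A + ((1 - lam : ℝ) : ℂ) • applyFun f B -
        applyFun f ((lam : ℂ) • A + ((1 - lam : ℝ) : ℂ) • B)).PosSemidef

noncomputable def entf {n : Type*} [Fintype n] [DecidableEq n]
    (f : ℝ → ℝ) (ρ : Matrix n n ℂ) : ℝ :=
  -(Matrix.trace (ρ * applyFun f ρ⁻¹)).re

noncomputable def ptraceB {α β : Type*} [Fintype β]
    (M : Matrix (α × β) (α × β) ℂ) : Matrix α α ℂ :=
  Matrix.of fun i j => ∑ k, M (i, k) (j, k)

noncomputable def ptraceA {α β : Type*} [Fintype α]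
    (M : Matrix (α × β) (α × β) ℂ) : Matrix β β ℂ :=
  Matrix.of fun i j => ∑ k, M (k, i) (k, j)

def NonAffineOn (I : Set ℝ) (f : ℝ → ℝ) : Prop :=
  ¬ ∃ c b : ℝ, ∀ t ∈ I, f t = c * t + b

/-! Since `√ρ_AB ρ_AB⁻¹ √ρ_AB = 1`, the two copies of `U` collapse and the left-hand side becomes
`Tr_B(σ_AB ((X ρ_A⁻¹) ⊗ I))`; a right factor of the form `Y ⊗ I` can be pulled out of the partial
trace over `B`, leaving `Tr_B(σ_AB) X ρ_A⁻¹ = σ_A X ρ_A⁻¹`. -/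

open scoped MatrixOrder

theorem ptraceB_mul_kronecker_one {α β : Type*} [Fintype α] [Fintype β] [DecidableEq β]
    (M : Matrix (α × β) (α × β) ℂ) (Y : Matrix α α ℂ) :
    ptraceB (M * (Y ⊗ₖ (1 : Matrix β β ℂ))) = ptraceB M * Y := by
  ext i j
  simp only [ptraceB, of_apply, mul_apply, kroneckerMap_apply, one_apply, Fintype.sum_prod_type,
    mul_ite, mul_one, mul_zero, Finset.sum_ite_eq', Finset.mem_univ, if_true, Finset.sum_mul]
  exact Finset.sum_comm

variable {n : Type*} [Fintype n] [DecidableEq n]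

theorem msqrt_eq_sqrt {A : Matrix n n ℂ} (hA : A.PosSemidef) : msqrt A = CFC.sqrt A := by
  rw [msqrt, dif_pos hA, CFC.sqrt_eq_real_sqrt A hA.nonneg, cfcₙ_eq_cfc, hA.1.cfc_eq]
  rfl

theorem msqrt_mul_self {A : Matrix n n ℂ} (hA : A.PosSemidef) : msqrt A * msqrt A = A := by
  rw [msqrt_eq_sqrt hA, CFC.sqrt_mul_sqrt_self A hA.nonneg]

theorem isUnit_msqrt {A : Matrix n n ℂ} (hA : A.PosDef) : IsUnit (msqrt A) := by
  rw [msqrt_eq_sqrt hA.posSemidef, CFC.isUnit_sqrt_iff A hA.posSemidef.nonneg]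
  exact hA.isUnit

theorem inv_msqrt_mul_inv_msqrt {A : Matrix n n ℂ} (hA : A.PosSemidef) :
    (msqrt A)⁻¹ * (msqrt A)⁻¹ = A⁻¹ := by
  rw [← Matrix.mul_inv_rev, msqrt_mul_self hA]

theorem msqrt_mul_inv_mul_msqrt {A : Matrix n n ℂ} (hA : A.PosDef) :
    msqrt A * A⁻¹ * msqrt A = 1 := by
  have hdet : IsUnit (msqrt A).det := (isUnit_iff_isUnit_det _).mp (isUnit_msqrt hA)
  calc msqrt A * A⁻¹ * msqrt A = (msqrt A * (msqrt A)⁻¹) * ((msqrt A)⁻¹ * msqrt A) := by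
        rw [← inv_msqrt_mul_inv_msqrt hA.posSemidef]; simp only [mul_assoc]
    _ = 1 := by rw [mul_nonsing_inv _ hdet, nonsing_inv_mul _ hdet, one_mul]

theorem V_intertwines_general {dA dB : ℕ}
    (ρAB σAB : Matrix (Fin dA × Fin dB) (Fin dA × Fin dB) ℂ)
    (hρAB : ρAB.PosDef)
    (ρA σA : Matrix (Fin dA) (Fin dA) ℂ)
    (hσA : σA = ptraceB σAB)
    (hρApos : ρA.PosDef)
    (X : Matrix (Fin dA) (Fin dA) ℂ) :
    ptraceB (σAB * (((X * (msqrt ρA)⁻¹) ⊗ₖ (1 : Matrix (Fin dB) (Fin dB) ℂ)) * msqrt ρAB) *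
        ρAB⁻¹ * (msqrt ρAB * ((msqrt ρA)⁻¹ ⊗ₖ (1 : Matrix (Fin dB) (Fin dB) ℂ)))) =
      σA * X * ρA⁻¹ := by
  set S := msqrt ρAB
  set K := (X * (msqrt ρA)⁻¹) ⊗ₖ (1 : Matrix (Fin dB) (Fin dB) ℂ)
  set L := (msqrt ρA)⁻¹ ⊗ₖ (1 : Matrix (Fin dB) (Fin dB) ℂ)
  have hKL : K * L = (X * ρA⁻¹) ⊗ₖ 1 := by
    rw [← mul_kronecker_mul, mul_assoc, inv_msqrt_mul_inv_msqrt hρApos.posSemidef, one_mul]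
  calc ptraceB (σAB * (K * S) * ρAB⁻¹ * (S * L)) = ptraceB (σAB * (K * (S * ρAB⁻¹ * S) * L)) := by
        simp only [mul_assoc]
    _ = ptraceB (σAB * ((X * ρA⁻¹) ⊗ₖ 1)) := by rw [msqrt_mul_inv_mul_msqrt hρAB, mul_one, hKL]
    _ = σA * X * ρA⁻¹ := by rw [ptraceB_mul_kronecker_one, hσA, mul_assoc]

/-- the isometry `V` from `U(X) = (X ρ_A^{-1/2} ⊗ I)√ρ_AB` intertwines the
relative modular operators: `U†(σ_AB U(X) ρ_AB⁻¹) = σ_A X ρ_A⁻¹` for all `X`. -/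
theorem V_intertwines {dA dB : ℕ}
    (ρAB σAB : Matrix (Fin dA × Fin dB) (Fin dA × Fin dB) ℂ)
    (hρAB : ρAB.PosDef) (hσAB : σAB.PosDef)
    (ρA σA : Matrix (Fin dA) (Fin dA) ℂ)
    (hρA : ρA = ptraceB ρAB) (hσA : σA = ptraceB σAB)
    (hρApos : ρA.PosDef) (hσApos : σA.PosDef)
    (X : Matrix (Fin dA) (Fin dA) ℂ) :
    ptraceB (σAB * (((X * (msqrt ρA)⁻¹) ⊗ₖ (1 : Matrix (Fin dB) (Fin dB) ℂ)) * msqrt ρAB) *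
        ρAB⁻¹ * (msqrt ρAB * ((msqrt ρA)⁻¹ ⊗ₖ (1 : Matrix (Fin dB) (Fin dB) ℂ)))) =
      σA * X * ρA⁻¹ :=
  V_intertwines_general ρAB σAB hρAB ρA σA hσA hρApos X
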